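/- Let I ⊆ ℝ be a nonempty interval, f : I → ℝ̄, n ≥ 2, and let M₁,…,Mₙ be continuous strict two-variable means on I such that f is lower Mᵢ-convex for every i ∈ {1,…,n}. Then for every i ∈ {1,…,n} and every i-th descendant N of the n-tuple (M₁,…,Mₙ), N is a strict mean on I and f is lower N-convex. -/
import Mathlib


/-- `M` is a two-variable mean on `I` (its values on pairs `x > y` are irrelevant). -/
def IsMeanOn (I : Set ℝ) (M : ℝ → ℝ → ℝ) : Prop :=
  ∀ x ∈ I, ∀ y ∈ I, x ≤ y → x ≤ M x y ∧ M x y ≤ y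

/-- `M` is a strict two-variable mean on `I`. -/
def IsStrictMeanOn (I : Set ℝ) (M : ℝ → ℝ → ℝ) : Prop :=
  IsMeanOn I M ∧ ∀ x ∈ I, ∀ y ∈ I, x < y → x < M x y ∧ M x y < y

/-- The map `φ_{(x,y)}(t₁,…,tₙ) = (M₁(x,t₂), M₂(t₁,t₃), …, Mₙ(t_{n-1},y))`
(0-indexed: `M i` is the paper's `M_{i+1}`). -/
def phiMap (n : ℕ) (M : Fin n → ℝ → ℝ → ℝ) (x y : ℝ) (t : Fin n → ℝ) : Fin n → ℝ :=
  fun i =>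
    M i (if _h : (i : ℕ) = 0 then x else t ⟨(i : ℕ) - 1, by have := i.isLt; omega⟩)
        (if _h : (i : ℕ) = n - 1 then y else t ⟨(i : ℕ) + 1, by have := i.isLt; omega⟩)

/-- The fixed point set `Φ_{(x,y)} = {ξ ∈ [x,y]ⁿ_≤ : φ_{(x,y)}(ξ) = ξ}`. -/
def phiFixedSet (n : ℕ) (M : Fin n → ℝ → ℝ → ℝ) (x y : ℝ) : Set (Fin n → ℝ) :=
  {t | (∀ i, t i ∈ Set.Icc x y) ∧ Monotone t ∧ phiMap n M x y t = t}

open Classical in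
/-- The lower sum `x ∔ y` on the extended reals: `x + y` if both are `> -∞`
(with `(+∞) ∔ (+∞) = +∞`), and `-∞` as soon as one summand is `-∞`. -/
noncomputable def lsum (a b : EReal) : EReal := if a = ⊥ ∨ b = ⊥ then ⊥ else a + b

open Classical in
/-- The upper sum `x ⊎ y` on the extended reals: `x + y` if both are `< +∞`
(with `(-∞) ⊎ (-∞) = -∞`), and `+∞` as soon as one summand is `+∞`. -/
noncomputable def usum (a b : EReal) : EReal := if a = ⊤ ∨ b = ⊤ then ⊤ else a + b

/-- The lower second-order divided difference `⌊x,y,z;f⌋`. -/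
noncomputable def ldd (f : ℝ → EReal) (x y z : ℝ) : EReal :=
  lsum (lsum (((1 / ((y - x) * (z - x)) : ℝ) : EReal) * f x)
             (((1 / ((x - y) * (z - y)) : ℝ) : EReal) * f y))
       (((1 / ((x - z) * (y - z)) : ℝ) : EReal) * f z)

/-- The upper second-order divided difference `⌈x,y,z;f⌉`. -/
noncomputable def udd (f : ℝ → EReal) (x y z : ℝ) : EReal :=
  usum (usum (((1 / ((y - x) * (z - x)) : ℝ) : EReal) * f x)
             (((1 / ((x - y) * (z - y)) : ℝ) : EReal) * f y))
       (((1 / ((x - z) * (y - z)) : ℝ) : EReal) * f z)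

/-- `f : I → ℝ̄` is lower `M`-convex: `⌊x, M(x,y), y; f⌋ ≥ 0` for all `x < y` in `I`. -/
def LowerConvexWrt (I : Set ℝ) (M : ℝ → ℝ → ℝ) (f : ℝ → EReal) : Prop :=
  ∀ x ∈ I, ∀ y ∈ I, x < y → 0 ≤ ldd f x (M x y) y

/-- `f : I → ℝ̄` is upper `M`-convex: `⌈x, M(x,y), y; f⌉ ≥ 0` for all `x < y` in `I`. -/
def UpperConvexWrt (I : Set ℝ) (M : ℝ → ℝ → ℝ) (f : ℝ → EReal) : Prop :=
  ∀ x ∈ I, ∀ y ∈ I, x < y → 0 ≤ udd f x (M x y) y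

section Helpers

lemma lsum_coe (a b : ℝ) : lsum (a:EReal) (b:EReal) = ((a+b:ℝ):EReal) := by
  simp [lsum]

lemma ldd_coe (f : ℝ → EReal) (x m y a b c : ℝ) (hx : f x = (a:EReal)) (hm : f m = (b:EReal))
    (hy : f y = (c:EReal)) :
    ldd f x m y = ((1/((m-x)*(y-x)) * a + 1/((x-m)*(y-m)) * b + 1/((x-y)*(m-y)) * c : ℝ) : EReal) := by
  rw [ldd, hx, hm, hy, ← EReal.coe_mul, ← EReal.coe_mul, ← EReal.coe_mul, lsum_coe, lsum_coe]

lemma ldd_facts {f : ℝ → EReal} {x m y : ℝ} (hxm : x < m) (hmy : m < y)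
    (h : 0 ≤ ldd f x m y) : f x ≠ ⊥ ∧ f m ≠ ⊤ ∧ f y ≠ ⊥ := by
  have h1 : (0:ℝ) < 1/((m-x)*(y-x)) := by
    apply div_pos one_pos; apply mul_pos <;> linarith
  have h2 : (1/((x-m)*(y-m)) : ℝ) < 0 := by
    apply div_neg_of_pos_of_neg one_pos
    apply mul_neg_of_neg_of_pos <;> linarith
  have h3 : (0:ℝ) < 1/((x-y)*(m-y)) := by
    apply div_pos one_pos
    apply mul_pos_of_neg_of_neg <;> linarith
  refine ⟨?_, ?_, ?_⟩
  · intro hb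
    rw [ldd, hb, EReal.coe_mul_bot_of_pos h1] at h
    simp [lsum] at h
  · intro ht
    rw [ldd, ht, EReal.coe_mul_top_of_neg h2] at h
    simp [lsum] at h
  · intro hb
    rw [ldd, hb, EReal.coe_mul_bot_of_pos h3] at h
    simp [lsum] at h


lemma pos_mul_ne_bot {c : ℝ} (hc : 0 < c) {a : EReal} (ha : a ≠ ⊥) : (c:EReal) * a ≠ ⊥ := by
  induction a using EReal.rec with
  | bot => exact absurd rfl ha
  | coe r => rw [← EReal.coe_mul]; exact EReal.coe_ne_bot _
  | top => rw [EReal.coe_mul_top_of_pos hc]; exact top_ne_bot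

lemma neg_mul_ne_bot {c : ℝ} (hc : c < 0) {a : EReal} (ha : a ≠ ⊤) : (c:EReal) * a ≠ ⊥ := by
  induction a using EReal.rec with
  | bot => rw [EReal.coe_mul_bot_of_neg hc]; exact top_ne_bot
  | coe r => rw [← EReal.coe_mul]; exact EReal.coe_ne_bot _
  | top => exact absurd rfl ha

lemma lsum_eq_add {a b : EReal} (ha : a ≠ ⊥) (hb : b ≠ ⊥) : lsum a b = a + b := by
  unfold lsum; rw [if_neg (not_or.mpr ⟨ha, hb⟩)]

lemma ldd_nonneg_of_top {f : ℝ → EReal} {x m y : ℝ} (hxm : x < m) (hmy : m < y)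
    (hx : f x ≠ ⊥) (hm : f m ≠ ⊤) (hy : f y ≠ ⊥) (htop : f x = ⊤ ∨ f y = ⊤) :
    0 ≤ ldd f x m y := by
  have h1 : (0:ℝ) < 1/((m-x)*(y-x)) := by
    apply div_pos one_pos; apply mul_pos <;> linarith
  have h2 : (1/((x-m)*(y-m)) : ℝ) < 0 := by
    apply div_neg_of_pos_of_neg one_pos
    apply mul_neg_of_neg_of_pos <;> linarith
  have h3 : (0:ℝ) < 1/((x-y)*(m-y)) := by
    apply div_pos one_pos
    apply mul_pos_of_neg_of_neg <;> linarith
  have ht1 : ((1/((m-x)*(y-x)) : ℝ) : EReal) * f x ≠ ⊥ := pos_mul_ne_bot h1 hx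
  have ht2 : ((1/((x-m)*(y-m)) : ℝ) : EReal) * f m ≠ ⊥ := neg_mul_ne_bot h2 hm
  have ht3 : ((1/((x-y)*(m-y)) : ℝ) : EReal) * f y ≠ ⊥ := pos_mul_ne_bot h3 hy
  have h12 : ((1/((m-x)*(y-x)) : ℝ) : EReal) * f x + ((1/((x-m)*(y-m)) : ℝ) : EReal) * f m ≠ ⊥ := by
    rw [Ne, EReal.add_eq_bot_iff]; exact not_or.mpr ⟨ht1, ht2⟩
  unfold ldd
  rw [lsum_eq_add ht1 ht2, lsum_eq_add h12 ht3]
  rcases htop with ht | ht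
  · rw [ht, EReal.coe_mul_top_of_pos h1, EReal.top_add_of_ne_bot ht2,
      EReal.top_add_of_ne_bot ht3]
    exact le_top
  · rw [ht, EReal.coe_mul_top_of_pos h3, EReal.add_top_of_ne_bot h12]
    exact le_top

lemma ldd_nonneg_iff {f : ℝ → EReal} {x m y a b c : ℝ} (hxm : x < m) (hmy : m < y)
    (hx : f x = (a:EReal)) (hm : f m = (b:EReal)) (hy : f y = (c:EReal)) :
    (0 ≤ ldd f x m y) ↔ (b - a) * (y - m) ≤ (c - b) * (m - x) := by
  rw [ldd_coe f x m y a b c hx hm hy]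
  rw [show ((0:EReal) = ((0:ℝ):EReal)) from rfl, EReal.coe_le_coe_iff]
  have hmx : m - x ≠ 0 := by linarith
  have hyx : y - x ≠ 0 := by linarith
  have hym : y - m ≠ 0 := by linarith
  have hxm' : x - m ≠ 0 := by linarith
  have hxy' : x - y ≠ 0 := by linarith
  have hmy' : m - y ≠ 0 := by linarith
  set E := 1/((m-x)*(y-x)) * a + 1/((x-m)*(y-m)) * b + 1/((x-y)*(m-y)) * c with hE
  have hD : (0:ℝ) < (m-x)*((y-m)*(y-x)) := by
    apply mul_pos (by linarith); apply mul_pos <;> linarith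
  have key : E * ((m-x)*((y-m)*(y-x))) = a*(y-m) + c*(m-x) - b*(y-x) := by
    rw [hE]; field_simp
    ring
  constructor
  · intro h
    have h0 := mul_nonneg h hD.le
    rw [key] at h0; nlinarith [h0]
  · intro h
    have h0 : 0 ≤ E * ((m-x)*((y-m)*(y-x))) := by rw [key]; nlinarith
    nlinarith [h0, hD]
end Helpers
lemma chain_slopes (t g : ℕ → ℝ) (m : ℕ)
    (ht : ∀ j ≤ m, t j < t (j+1))
    (hloc : ∀ j, 1 ≤ j → j ≤ m →
      (g j - g (j-1)) * (t (j+1) - t j) ≤ (g (j+1) - g j) * (t j - t (j-1)))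
    (i : ℕ) (hi1 : 1 ≤ i) (him : i ≤ m) :
    (g i - g 0) * (t (m+1) - t i) ≤ (g (m+1) - g i) * (t i - t 0) := by
  -- strict monotonicity of t on [0, m+1]
  have tmono : ∀ a b, a < b → b ≤ m + 1 → t a < t b := by
    intro a b hab hbm
    induction b with
    | zero => omega
    | succ b ih =>
      rcases Nat.lt_or_ge a b with h | h
      · exact (ih h (by omega)).trans (ht b (by omega))
      · have : a = b := by omega
        subst this; exact ht a (by omega)
  set s : ℕ → ℝ := fun j => (g (j+1) - g j) / (t (j+1) - t j) with hs
  have hpos : ∀ j ≤ m, 0 < t (j+1) - t j := fun j hj => by linarith [ht j hj]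
  have hsloc : ∀ j, 1 ≤ j → j ≤ m → s (j-1) ≤ s j := by
    intro j h1 h2
    obtain ⟨k, rfl⟩ : ∃ k, j = k + 1 := ⟨j - 1, by omega⟩
    simp only [Nat.add_sub_cancel]
    rw [hs]
    simp only []
    rw [div_le_div_iff₀ (hpos k (by omega)) (hpos (k+1) h2)]
    have h := hloc (k+1) h1 h2
    simp only [Nat.add_sub_cancel] at h
    linarith
  -- left slopes
  have L : ∀ j, 1 ≤ j → j ≤ m + 1 → (g j - g 0) / (t j - t 0) ≤ s (j-1) := by
    intro j
    induction j with
    | zero => omega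
    | succ j ih =>
      intro _ hj1
      rcases Nat.eq_or_lt_of_le (show 1 ≤ j + 1 from by omega) with h | h
      · have hj0 : j = 0 := by omega
        subst hj0
        simp [hs]
      · have hj : 1 ≤ j := by omega
        have hle : j ≤ m := by omega
        have ihj := ih hj (by omega)
        have hstep := hsloc j hj hle
        have h1 : (g j - g 0) / (t j - t 0) ≤ s j := le_trans ihj hstep
        have hpt : 0 < t j - t 0 := by linarith [tmono 0 j (by omega) (by omega)]
        have hpt2 : 0 < t (j+1) - t j := hpos j hle
        have hpt3 : 0 < t (j+1) - t 0 := by linarith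
        have hgj : g j - g 0 ≤ s j * (t j - t 0) := by
          rw [div_le_iff₀ hpt] at h1; linarith
        have hgj1 : g (j+1) - g j = s j * (t (j+1) - t j) := by
          rw [hs]; field_simp
        show (g (j+1) - g 0) / (t (j+1) - t 0) ≤ s j
        rw [div_le_iff₀ hpt3]
        nlinarith [hgj, hgj1]
  -- right slopes
  have R : ∀ k j, j + k = m → s j ≤ (g (m+1) - g j) / (t (m+1) - t j) := by
    intro k
    induction k with
    | zero =>
      intro j hj
      have : j = m := by omega
      subst this
      simp [hs]
    | succ k ih =>
      intro j hj
      have hR := ih (j+1) (by omega)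
      have hj1 : 1 ≤ j + 1 := by omega
      have hjm : j + 1 ≤ m := by omega
      have hstep : s j ≤ s (j+1) := by
        have := hsloc (j+1) hj1 hjm
        simpa using this
      have h1 : s j ≤ (g (m+1) - g (j+1)) / (t (m+1) - t (j+1)) := le_trans hstep hR
      have hpt : 0 < t (m+1) - t (j+1) := by linarith [tmono (j+1) (m+1) (by omega) le_rfl]
      have hpt2 : 0 < t (j+1) - t j := hpos j (by omega)
      have hpt3 : 0 < t (m+1) - t j := by linarith
      have hgj : s j * (t (m+1) - t (j+1)) ≤ g (m+1) - g (j+1) := by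
        rw [le_div_iff₀ hpt] at h1; linarith
      have hgj1 : g (j+1) - g j = s j * (t (j+1) - t j) := by
        rw [hs]; field_simp
      rw [le_div_iff₀ hpt3]
      nlinarith [hgj, hgj1]
  have hL := L i hi1 (by omega)
  have hmid := hsloc i hi1 him
  have hR := R (m - i) i (by omega)
  have hfinal : (g i - g 0) / (t i - t 0) ≤ (g (m+1) - g i) / (t (m+1) - t i) :=
    le_trans hL (le_trans hmid hR)
  have hpt : 0 < t i - t 0 := by linarith [tmono 0 i (by omega) (by omega)]
  have hpt2 : 0 < t (m+1) - t i := by linarith [tmono i (m+1) (by omega) le_rfl]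
  rw [div_le_div_iff₀ hpt hpt2] at hfinal
  linarith
/-- The chain `x = t 0 ≤ ξ 0 ≤ ⋯ ≤ ξ (n-1) ≤ t (n+1) = y`. -/
noncomputable def chainOf (n : ℕ) (ξ : Fin n → ℝ) (x y : ℝ) : ℕ → ℝ := fun j =>
  if h : 1 ≤ j ∧ j ≤ n then ξ ⟨j - 1, by omega⟩ else if j = 0 then x else y

lemma chainOf_zero (n : ℕ) (ξ : Fin n → ℝ) (x y : ℝ) : chainOf n ξ x y 0 = x := by
  simp [chainOf]

lemma chainOf_last (n : ℕ) (ξ : Fin n → ℝ) (x y : ℝ) {j : ℕ} (hj : n < j) :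
    chainOf n ξ x y j = y := by
  simp only [chainOf]
  rw [dif_neg (by omega), if_neg (by omega)]

lemma chainOf_mid (n : ℕ) (ξ : Fin n → ℝ) (x y : ℝ) {j : ℕ} (h1 : 1 ≤ j) (h2 : j ≤ n) :
    chainOf n ξ x y j = ξ ⟨j - 1, by omega⟩ := by
  simp only [chainOf]
  rw [dif_pos ⟨h1, h2⟩]

section Chain

variable {n : ℕ} {M : Fin n → ℝ → ℝ → ℝ} {x y : ℝ} {ξ : Fin n → ℝ}

lemma chain_fix (hn : 2 ≤ n) (hξ : ξ ∈ phiFixedSet n M x y) :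
    ∀ j (h1 : 1 ≤ j) (h2 : j ≤ n),
      chainOf n ξ x y j
        = M ⟨j - 1, by omega⟩ (chainOf n ξ x y (j - 1)) (chainOf n ξ x y (j + 1)) := by
  intro j h1 h2
  have hfix := hξ.2.2
  have hj := congrFun hfix ⟨j - 1, by omega⟩
  rw [chainOf_mid n ξ x y h1 h2]
  rw [← hj]
  simp only [phiMap]
  congr 1
  · -- first argument
    by_cases hj1 : j = 1
    · subst hj1
      rw [dif_pos (by omega), chainOf_zero]
    · rw [dif_neg (by omega)]
      rw [chainOf_mid n ξ x y (by omega) (by omega)]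
  · -- second argument
    by_cases hjn : j = n
    · rw [dif_pos (by omega)]
      rw [chainOf_last n ξ x y (by omega)]
    · rw [dif_neg (by omega)]
      rw [chainOf_mid n ξ x y (by omega) (by omega)]
      congr 1
      simp only [Fin.mk.injEq]
      omega

lemma chain_bounds (hxy : x ≤ y) (hξ : ξ ∈ phiFixedSet n M x y) :
    ∀ j, x ≤ chainOf n ξ x y j ∧ chainOf n ξ x y j ≤ y := by
  intro j
  by_cases h : 1 ≤ j ∧ j ≤ n
  · rw [chainOf_mid n ξ x y h.1 h.2]
    exact ⟨(hξ.1 _).1, (hξ.1 _).2⟩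
  · rcases Nat.eq_zero_or_pos j with h0 | h0
    · subst h0; rw [chainOf_zero]; exact ⟨le_rfl, hxy⟩
    · rw [chainOf_last n ξ x y (by omega)]; exact ⟨hxy, le_rfl⟩

lemma chain_mono (hxy : x ≤ y) (hξ : ξ ∈ phiFixedSet n M x y) :
    ∀ j, chainOf n ξ x y j ≤ chainOf n ξ x y (j + 1) := by
  intro j
  rcases Nat.eq_zero_or_pos j with h0 | h0
  · subst h0
    rw [chainOf_zero]
    exact (chain_bounds hxy hξ (0+1)).1
  rcases Nat.lt_or_ge j n with hlt | hge
  · rw [chainOf_mid n ξ x y h0 (by omega), chainOf_mid n ξ x y (by omega) (by omega)]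
    exact hξ.2.1 (by simp only [Fin.mk_le_mk]; omega)
  · rw [chainOf_last n ξ x y (show n < j + 1 by omega)]
    exact (chain_bounds hxy hξ j).2

end Chain
section ChainStrict

variable {I : Set ℝ} {n : ℕ} {M : Fin n → ℝ → ℝ → ℝ} {x y : ℝ} {ξ : Fin n → ℝ}

lemma chain_strict (hI : Set.OrdConnected I) (hn : 2 ≤ n)
    (hMs : ∀ i, IsStrictMeanOn I (M i))
    (hx : x ∈ I) (hy : y ∈ I) (hxy : x < y) (hξ : ξ ∈ phiFixedSet n M x y) :
    ∀ j ≤ n, chainOf n ξ x y j < chainOf n ξ x y (j + 1) := by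
  set t := chainOf n ξ x y with hts
  have tI : ∀ j, t j ∈ I := by
    intro j
    exact hI.out hx hy ⟨(chain_bounds hxy.le hξ j).1, (chain_bounds hxy.le hξ j).2⟩
  have tmono : ∀ j, t j ≤ t (j + 1) := chain_mono hxy.le hξ
  intro j hj
  by_contra hlt
  have heq : t j = t (j + 1) := le_antisymm (tmono j) (not_lt.mp hlt)
  have down : ∀ l, 1 ≤ l → l ≤ n → t l = t (l + 1) → t (l - 1) = t l := by
    intro l h1 h2 he
    obtain ⟨k, rfl⟩ : ∃ k, l = k + 1 := ⟨l - 1, by omega⟩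
    simp only [Nat.add_sub_cancel]
    have hfix := chain_fix hn hξ (k + 1) h1 h2
    simp only [Nat.add_sub_cancel] at hfix
    rw [← hts] at hfix
    rw [← he] at hfix
    by_contra hne
    have hk : t k < t (k + 1) := lt_of_le_of_ne (tmono k) hne
    have := ((hMs ⟨k, by omega⟩).2 (t k) (tI k) (t (k + 1)) (tI (k + 1)) hk).2
    rw [← hfix] at this
    exact lt_irrefl _ this
  have up : ∀ l, l + 1 ≤ n → t l = t (l + 1) → t (l + 1) = t (l + 2) := by
    intro l h2 he
    have hfix := chain_fix hn hξ (l + 1) (by omega) h2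
    simp only [Nat.add_sub_cancel] at hfix
    rw [← hts] at hfix
    rw [he] at hfix
    by_contra hne
    have hk : t (l + 1) < t (l + 2) := lt_of_le_of_ne (tmono (l + 1)) hne
    have := ((hMs ⟨l, by omega⟩).2 (t (l + 1)) (tI (l + 1)) (t (l + 2)) (tI (l + 2)) hk).1
    rw [← hfix] at this
    exact lt_irrefl _ this
  have hd : ∀ d, d ≤ j → t (j - d) = t (j - d + 1) := by
    intro d
    induction d with
    | zero => intro _; simpa using heq
    | succ d ih =>
      intro hdj
      have hprev := ih (by omega)
      rcases Nat.eq_zero_or_pos (j - d) with h0 | h0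
      · omega
      · rw [show j - (d + 1) = (j - d) - 1 from by omega,
            show (j - d) - 1 + 1 = j - d from by omega]
        exact down (j - d) h0 (by omega) hprev
  have h01 : t 0 = t 1 := by
    have := hd j le_rfl
    simpa using this
  have hall : ∀ l, l ≤ n → t l = t (l + 1) := by
    intro l
    induction l with
    | zero => intro _; exact h01
    | succ l ih =>
      intro hl
      exact up l hl (ih (by omega))
  have h0k : ∀ k, k ≤ n + 1 → t 0 = t k := by
    intro k
    induction k with
    | zero => intro _; rfl
    | succ k ih =>
      intro hk
      exact (ih (by omega)).trans (hall k (by omega))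
  have : x = y := by
    have := h0k (n + 1) le_rfl
    rwa [hts, chainOf_zero, chainOf_last n ξ x y (by omega)] at this
  exact absurd this hxy.ne

lemma chain_strict_lt (hI : Set.OrdConnected I) (hn : 2 ≤ n)
    (hMs : ∀ i, IsStrictMeanOn I (M i))
    (hx : x ∈ I) (hy : y ∈ I) (hxy : x < y) (hξ : ξ ∈ phiFixedSet n M x y) :
    ∀ a b, a < b → b ≤ n + 1 → chainOf n ξ x y a < chainOf n ξ x y b := by
  intro a b hab hbm
  induction b with
  | zero => omega
  | succ b ih =>
    rcases Nat.lt_or_ge a b with h | h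
    · exact (ih h (by omega)).trans (chain_strict hI hn hMs hx hy hxy hξ b (by omega))
    · have : a = b := by omega
      subst this
      exact chain_strict hI hn hMs hx hy hxy hξ a (by omega)

end ChainStrict
/-- Lower convexity is inherited by descendants: if `f` is lower
`Mᵢ`-convex for continuous strict means `M₁,…,Mₙ` and `N` is an `i`-th descendant of
`(M₁,…,Mₙ)` (i.e. `N(x,x) = x` and, for `x < y`, `N(x,y)` is the `i`-th coordinate of
some fixed point of `φ_{(x,y)}`), then `N` is a strict mean and `f` is lower `N`-convex. -/
theorem stmt17 (I : Set ℝ) (hI : Set.OrdConnected I) (hne : I.Nonempty)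
    (f : ℝ → EReal) (n : ℕ) (hn : 2 ≤ n)
    (M : Fin n → ℝ → ℝ → ℝ)
    (hMs : ∀ i, IsStrictMeanOn I (M i))
    (hMc : ∀ i, ContinuousOn (fun p : ℝ × ℝ => M i p.1 p.2)
      {p : ℝ × ℝ | p.1 ∈ I ∧ p.2 ∈ I ∧ p.1 ≤ p.2})
    (hconv : ∀ i, LowerConvexWrt I (M i) f)
    (i : Fin n) (N : ℝ → ℝ → ℝ)
    (hNdiag : ∀ x ∈ I, N x x = x)
    (hN : ∀ x ∈ I, ∀ y ∈ I, x < y → ∃ ξ ∈ phiFixedSet n M x y, N x y = ξ i) :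
    IsStrictMeanOn I N ∧ LowerConvexWrt I N f := by
  have hin : (i : ℕ) < n := i.isLt
  -- the descendant value sits strictly inside
  have hmid : ∀ (x y : ℝ) (ξ : Fin n → ℝ), chainOf n ξ x y ((i : ℕ) + 1) = ξ i := by
    intro x y ξ
    rw [chainOf_mid n ξ x y (by omega) (by omega)]
    exact congrArg ξ (Fin.ext (by simp))
  have hstrict : ∀ x ∈ I, ∀ y ∈ I, x < y → x < N x y ∧ N x y < y := by
    intro x hx y hy hxy
    obtain ⟨ξ, hξ, hNe⟩ := hN x hx y hy hxy
    have h1 := chain_strict_lt hI hn hMs hx hy hxy hξ 0 ((i : ℕ) + 1) (by omega) (by omega)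
    have h2 := chain_strict_lt hI hn hMs hx hy hxy hξ ((i : ℕ) + 1) (n + 1) (by omega) le_rfl
    rw [chainOf_zero, hmid] at h1
    rw [hmid, chainOf_last n ξ x y (show n < n + 1 by omega)] at h2
    rw [hNe]
    exact ⟨h1, h2⟩
  constructor
  · refine ⟨?_, fun x hx y hy hxy => hstrict x hx y hy hxy⟩
    intro x hx y hy hxy
    rcases hxy.eq_or_lt with heq | hlt
    · subst heq
      rw [hNdiag x hx]
      exact ⟨le_rfl, le_rfl⟩
    · exact ⟨(hstrict x hx y hy hlt).1.le, (hstrict x hx y hy hlt).2.le⟩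
  · intro x hx y hy hxy
    obtain ⟨ξ, hξ, hNe⟩ := hN x hx y hy hxy
    set t := chainOf n ξ x y with hts
    have e0 : t 0 = x := chainOf_zero n ξ x y
    have elast : t (n + 1) = y := chainOf_last n ξ x y (by omega)
    have tI : ∀ j, t j ∈ I := fun j =>
      hI.out hx hy ⟨(chain_bounds hxy.le hξ j).1, (chain_bounds hxy.le hξ j).2⟩
    have tstrict : ∀ j ≤ n, t j < t (j + 1) := chain_strict hI hn hMs hx hy hxy hξ
    have tlt : ∀ a b, a < b → b ≤ n + 1 → t a < t b :=
      chain_strict_lt hI hn hMs hx hy hxy hξ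
    have hNt : N x y = t ((i : ℕ) + 1) := by rw [hNe, hts, hmid]
    have hldd : ∀ j, 1 ≤ j → j ≤ n → 0 ≤ ldd f (t (j - 1)) (t j) (t (j + 1)) := by
      intro j h1 h2
      have h := hconv ⟨j - 1, by omega⟩ (t (j - 1)) (tI _) (t (j + 1)) (tI _)
        (tlt (j - 1) (j + 1) (by omega) (by omega))
      have hfix := chain_fix hn hξ j h1 h2
      rw [← hts] at hfix
      rwa [← hfix] at h
    have hnt : ∀ j, 1 ≤ j → j ≤ n → f (t j) ≠ ⊤ := by
      intro j h1 h2
      exact (ldd_facts (tlt (j - 1) j (by omega) (by omega))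
        (tlt j (j + 1) (by omega) (by omega)) (hldd j h1 h2)).2.1
    have hnb : ∀ j, j ≤ n + 1 → f (t j) ≠ ⊥ := by
      intro j hj
      by_cases hj0 : j = 0
      · subst hj0
        have h := hldd 1 le_rfl (by omega)
        rw [show (1 : ℕ) - 1 = 0 from rfl] at h
        exact (ldd_facts (tlt 0 1 (by omega) (by omega))
          (tlt 1 2 (by omega) (by omega)) h).1
      by_cases hj1 : 1 ≤ j ∧ j ≤ n - 1
      · have h := hldd (j + 1) (by omega) (by omega)
        simp only [Nat.add_sub_cancel] at h
        exact (ldd_facts (tlt j (j + 1) (by omega) (by omega))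
          (tlt (j + 1) (j + 2) (by omega) (by omega)) h).1
      · obtain ⟨k, rfl⟩ : ∃ k, j = k + 1 := ⟨j - 1, by omega⟩
        have h := hldd k (by omega) (by omega)
        exact (ldd_facts (tlt (k - 1) k (by omega) (by omega))
          (tlt k (k + 1) (by omega) (by omega)) h).2.2
    rw [hNt]
    have hxm : x < t ((i : ℕ) + 1) := by rw [← e0]; exact tlt 0 _ (by omega) (by omega)
    have hmy : t ((i : ℕ) + 1) < y := by rw [← elast]; exact tlt _ (n + 1) (by omega) le_rfl
    by_cases htop : f x = ⊤ ∨ f y = ⊤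
    · refine ldd_nonneg_of_top hxm hmy ?_ ?_ ?_ htop
      · rw [← e0]; exact hnb 0 (by omega)
      · exact hnt _ (by omega) (by omega)
      · rw [← elast]; exact hnb (n + 1) le_rfl
    · push_neg at htop
      set g : ℕ → ℝ := fun j => (f (t j)).toReal with hg
      have hcoe : ∀ j, j ≤ n + 1 → f (t j) = ((g j : ℝ) : EReal) := by
        intro j hj
        by_cases h1 : 1 ≤ j ∧ j ≤ n
        · exact (EReal.coe_toReal (hnt j h1.1 h1.2) (hnb j hj)).symm
        · rcases Nat.eq_zero_or_pos j with h0 | h0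
          · subst h0
            exact (EReal.coe_toReal (by rw [e0]; exact htop.1) (hnb 0 (by omega))).symm
          · have hj' : j = n + 1 := by omega
            subst hj'
            exact (EReal.coe_toReal (by rw [elast]; exact htop.2) (hnb (n + 1) le_rfl)).symm
      have hloc : ∀ j, 1 ≤ j → j ≤ n →
          (g j - g (j - 1)) * (t (j + 1) - t j) ≤ (g (j + 1) - g j) * (t j - t (j - 1)) := by
        intro j h1 h2
        exact (ldd_nonneg_iff (tlt (j - 1) j (by omega) (by omega))
          (tlt j (j + 1) (by omega) (by omega))
          (hcoe (j - 1) (by omega)) (hcoe j (by omega)) (hcoe (j + 1) (by omega))).mp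
          (hldd j h1 h2)
      have hres := chain_slopes t g n tstrict hloc ((i : ℕ) + 1) (by omega) (by omega)
      rw [e0, elast] at hres
      have hc0 : f x = ((g 0 : ℝ) : EReal) := by rw [← e0]; exact hcoe 0 (by omega)
      have hcl : f y = ((g (n + 1) : ℝ) : EReal) := by rw [← elast]; exact hcoe (n + 1) le_rfl
      exact (ldd_nonneg_iff hxm hmy hc0 (hcoe _ (by omega)) hcl).mpr hres
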